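/- Let δ = d/dx on ℂ(x) and let f = a/b ∈ ℂ(x) with gcd(a, b) = 1 be differential-reduced, i.e., gcd(b, a − i·δ(b)) = 1 for all integers i. If g ∈ ℂ(x) satisfies b·δ(g) + a·g ∈ ℂ[x], then g ∈ ℂ[x]. Moreover, if f is differential-reduced then f + m·δ(b)/b is differential-reduced for every m ∈ ℤ, and δ(h) is differential-reduced for every h ∈ ℂ(x). -/

import Mathlib

/-!
Write `g = u / v` in lowest terms. Leibniz's rule gives `δ g · v² = W(v, u) = v u' - v' u`, and
if `v = (x - r)^(j+1) w` with `w(r) ≠ 0 ≠ u(r)`, then `W(v, u) = (x - r)^j t` with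
`t(r) = -(j + 1) u(r) w(r) ≠ 0`: every pole of `δ g` has order at least two. So `δ h` has no
simple poles, which makes it differential-reduced. If `b δ g + a g` is a polynomial although
`v(r) = 0`, clearing denominators and comparing the two lowest powers of `x - r` forces
`b(r) = 0` and `a(r) = (j + 1) b'(r)`, i.e. `f` has the integer residue `j + 1` at `r`.
Adding `m δ(b) / b` keeps the denominator `b` and shifts all these residues by `m`.
-/

/-- A rational function `f ∈ ℂ(x)` with reduced representation `f = num/denom` is
differential-reduced (w.r.t. `d/dx`) if `gcd(denom, num − i·denom') = 1` for all `i ∈ ℤ`. -/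
def DiffReduced (f : RatFunc ℂ) : Prop :=
  ∀ i : ℤ, IsCoprime f.denom (f.num - (i : Polynomial ℂ) * Polynomial.derivative f.denom)

open Polynomial

theorem IsCoprime.not_isRoot_of_isRoot {R : Type*} [CommRing R] [Nontrivial R] {p q : R[X]}
    (h : IsCoprime p q) {r : R} (hp : p.IsRoot r) : ¬ q.IsRoot r := by
  simpa [hp.eq_zero] using aeval_ne_zero_of_isCoprime h r

namespace Polynomial

theorem isCoprime_of_forall_isRoot {K : Type*} [Field K] [IsAlgClosed K] {p q : K[X]}
    (h : ∀ r, p.IsRoot r → ¬ q.IsRoot r) : IsCoprime p q := by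
  refine (isCoprime_iff_aeval_ne_zero_of_isAlgClosed K K p q).2 fun r => ?_
  by_cases hp : p.IsRoot r
  · exact .inr (by simpa using h r hp)
  · exact .inl (by simpa using hp)

theorem wronskian_X_sub_C_pow_succ_mul {R : Type*} [CommRing R] (r : R) (j : ℕ) (w u : R[X]) :
    wronskian ((X - C r) ^ (j + 1) * w) u =
      (X - C r) ^ j * ((X - C r) * wronskian w u - (j + 1 : R[X]) * w * u) := by
  simp only [wronskian, derivative_mul, derivative_pow, derivative_X_sub_C, add_tsub_cancel_right,
    C_eq_natCast]
  push_cast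
  ring

variable {K : Type*} [Field K]

theorem exists_wronskian_eq_pow_mul {v : K[X]} (hv : v ≠ 0) {r : K} (hvr : v.IsRoot r)
    (u : K[X]) :
    ∃ (j : ℕ) (w t : K[X]), v = (X - C r) ^ (j + 1) * w ∧ ¬ w.IsRoot r ∧
      wronskian v u = (X - C r) ^ j * t ∧ t.eval r = -(j + 1) * (u.eval r * w.eval r) := by
  obtain ⟨j, hj⟩ := Nat.exists_eq_add_one.2 ((rootMultiplicity_pos hv).2 hvr)
  set w := v /ₘ (X - C r) ^ rootMultiplicity r v
  have hvw : v = (X - C r) ^ (j + 1) * w := by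
    rw [← hj]; exact (pow_mul_divByMonic_rootMultiplicity_eq v r).symm
  refine ⟨j, w, (X - C r) * wronskian w u - (j + 1 : K[X]) * w * u, hvw,
    eval_divByMonic_pow_rootMultiplicity_ne_zero r hv, ?_, ?_⟩
  · rw [hvw, wronskian_X_sub_C_pow_succ_mul]
  · simp only [eval_sub, eval_mul, eval_X, eval_C, sub_self, zero_mul, eval_add, eval_natCast,
      eval_one, zero_sub]
    ring

variable [CharZero K]

theorem exists_not_isCoprime_of_wronskian_eq {a b u v q : K[X]} (hv : v ≠ 0) {r : K}
    (hvr : v.IsRoot r) (hur : ¬ u.IsRoot r) (h : b * wronskian v u + a * (u * v) = q * v ^ 2) :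
    ∃ i : ℤ, ¬ IsCoprime b (a - (i : K[X]) * derivative b) := by
  obtain ⟨j, w, t, rfl, hwr, hW, ht⟩ := exists_wronskian_eq_pow_mul hv hvr u
  have huw : u.eval r * w.eval r ≠ 0 := mul_ne_zero hur hwr
  have hX : X - C r ≠ 0 := X_sub_C_ne_zero r
  have h₁ : b * t + (X - C r) * (a * u * w) = (X - C r) ^ (j + 2) * (q * w ^ 2) :=
    mul_left_cancel₀ (pow_ne_zero j hX) (by rw [hW] at h; linear_combination h)
  have hbr : b.IsRoot r := by
    have htr : t.eval r ≠ 0 := by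
      rw [ht]; exact mul_ne_zero (neg_ne_zero.2 (Nat.cast_add_one_ne_zero j)) huw
    simpa [htr] using congrArg (eval r) h₁
  obtain ⟨c, rfl⟩ := dvd_iff_isRoot.2 hbr
  have h₂ : c * t + a * u * w = (X - C r) ^ (j + 1) * (q * w ^ 2) :=
    mul_left_cancel₀ hX (by linear_combination h₁)
  have hres : (a.eval r - (j + 1) * c.eval r) * (u.eval r * w.eval r) = 0 := by
    have hr := congrArg (eval r) h₂
    simp only [eval_add, eval_mul, ht, eval_pow, eval_sub, eval_X, eval_C, sub_self] at hr
    linear_combination hr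
  refine ⟨j + 1, fun hcop => hcop.not_isRoot_of_isRoot hbr ?_⟩
  simpa [derivative_mul] using (mul_eq_zero.1 hres).resolve_right huw

theorem isRoot_derivative_of_mul_sq_eq_wronskian_mul {A B u v : K[X]} (hAB : IsCoprime A B)
    (huv : IsCoprime u v) (hv : v ≠ 0) (hB : B ≠ 0) (h : A * v ^ 2 = wronskian v u * B)
    {r : K} (hBr : B.IsRoot r) : (derivative B).IsRoot r := by
  have hAr : ¬ A.IsRoot r := hAB.symm.not_isRoot_of_isRoot hBr
  have hvr : v.IsRoot r := by
    have hr := congrArg (eval r) h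
    simp only [eval_mul, eval_pow, hBr.eq_zero, mul_zero, mul_eq_zero, pow_eq_zero_iff,
      ne_eq, OfNat.ofNat_ne_zero, not_false_eq_true] at hr
    exact hr.resolve_left hAr
  obtain ⟨j, w, t, rfl, hwr, hW, ht⟩ := exists_wronskian_eq_pow_mul hv hvr u
  have htr : ¬ t.IsRoot r := by
    rw [IsRoot, ht]
    exact mul_ne_zero (neg_ne_zero.2 (Nat.cast_add_one_ne_zero j))
      (mul_ne_zero (huv.symm.not_isRoot_of_isRoot hvr) hwr)
  have hX : X - C r ≠ 0 := X_sub_C_ne_zero r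
  have h₁ : (X - C r) ^ (j + 2) * (A * w ^ 2) = t * B :=
    mul_left_cancel₀ (pow_ne_zero j hX) (by rw [hW] at h; linear_combination h)
  have hdvd : (X - C r) ^ (j + 2) ∣ B :=
    (prime_X_sub_C r).pow_dvd_of_dvd_mul_left _ (by rwa [dvd_iff_isRoot]) ⟨_, h₁.symm⟩
  have hmult : 1 < B.rootMultiplicity r :=
    (le_rootMultiplicity_iff hB).2 ((pow_dvd_pow _ (by omega)).trans hdvd)
  exact ((one_lt_rootMultiplicity_iff_isRoot hB).1 hmult).2

end Polynomial

namespace RatFunc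

variable {K : Type*} [Field K]

theorem denom_div_of_isCoprime {p q : K[X]} (hq : q.Monic) (hpq : IsCoprime p q) :
    (algebraMap K[X] (RatFunc K) p / algebraMap K[X] (RatFunc K) q).denom = q := by
  set x := algebraMap K[X] (RatFunc K) p / algebraMap K[X] (RatFunc K) q
  have hx : x.num * q = p * x.denom := (num_mul_eq_mul_denom_iff hq.ne_zero).2 rfl
  refine eq_of_monic_of_associated (monic_denom x) hq
    (associated_of_dvd_dvd (denom_div_dvd p q) ?_)
  exact hpq.symm.dvd_of_dvd_mul_left ⟨x.num, by rw [← hx, mul_comm]⟩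

theorem num_div_of_isCoprime {p q : K[X]} (hq : q.Monic) (hpq : IsCoprime p q) :
    (algebraMap K[X] (RatFunc K) p / algebraMap K[X] (RatFunc K) q).num = p := by
  have hx := (num_mul_eq_mul_denom_iff hq.ne_zero
    (x := algebraMap K[X] (RatFunc K) p / algebraMap K[X] (RatFunc K) q)).2 rfl
  rw [denom_div_of_isCoprime hq hpq] at hx
  exact mul_right_cancel₀ hq.ne_zero hx

theorem mul_denom_sq_eq_wronskian (δ : RatFunc K → RatFunc K)
    (hmul : ∀ a b : RatFunc K, δ (a * b) = a * δ b + b * δ a)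
    (hder : ∀ p : K[X],
      δ (algebraMap K[X] (RatFunc K) p) = algebraMap K[X] (RatFunc K) (derivative p))
    (g : RatFunc K) :
    δ g * algebraMap K[X] (RatFunc K) g.denom ^ 2 =
      algebraMap K[X] (RatFunc K) (wronskian g.denom g.num) := by
  have hv : algebraMap K[X] (RatFunc K) g.denom ≠ 0 := algebraMap_ne_zero (denom_ne_zero g)
  have hg : g * algebraMap K[X] (RatFunc K) g.denom = algebraMap K[X] (RatFunc K) g.num :=
    ((div_eq_iff hv).1 (num_div_denom g)).symm
  have hδ := congrArg δ hg
  rw [hmul, hder, hder] at hδ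
  rw [wronskian, map_sub, map_mul, map_mul, ← hδ, ← hg]
  ring

end RatFunc

theorem DiffReduced.exists_eq_algebraMap {f g : RatFunc ℂ} (hf : DiffReduced f)
    (δ : RatFunc ℂ → RatFunc ℂ) (hmul : ∀ a b : RatFunc ℂ, δ (a * b) = a * δ b + b * δ a)
    (hder : ∀ p : ℂ[X],
      δ (algebraMap ℂ[X] (RatFunc ℂ) p) = algebraMap ℂ[X] (RatFunc ℂ) (derivative p))
    (hg : ∃ q : ℂ[X], algebraMap ℂ[X] (RatFunc ℂ) f.denom * δ g +
      algebraMap ℂ[X] (RatFunc ℂ) f.num * g = algebraMap ℂ[X] (RatFunc ℂ) q) :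
    ∃ q : ℂ[X], g = algebraMap ℂ[X] (RatFunc ℂ) q := by
  obtain ⟨q, hq⟩ := hg
  suffices hv : g.denom = 1 from ⟨g.num, by
    conv_lhs => rw [← RatFunc.num_div_denom g, hv, map_one, div_one]⟩
  by_contra hv
  obtain ⟨r, hr⟩ := IsAlgClosed.exists_root g.denom
    (natDegree_pos_iff_degree_pos.1 ((RatFunc.monic_denom g).natDegree_pos.2 hv)).ne'
  have hpoly : f.denom * wronskian g.denom g.num + f.num * (g.num * g.denom) =
      q * g.denom ^ 2 := by
    apply RatFunc.algebraMap_injective ℂ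
    have hu := (div_eq_iff (RatFunc.algebraMap_ne_zero (RatFunc.denom_ne_zero g))).1
      (RatFunc.num_div_denom g)
    simp only [map_add, map_mul, map_pow, ← RatFunc.mul_denom_sq_eq_wronskian δ hmul hder, hu,
      ← hq]
    ring
  obtain ⟨i, hi⟩ := exists_not_isCoprime_of_wronskian_eq (RatFunc.denom_ne_zero g) hr
    ((RatFunc.isCoprime_num_denom g).symm.not_isRoot_of_isRoot hr) hpoly
  exact hi (hf i)

theorem DiffReduced.add_intCast_mul_derivative_denom_div {f : RatFunc ℂ} (hf : DiffReduced f)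
    (m : ℤ) : DiffReduced (f + (m : RatFunc ℂ) *
      algebraMap ℂ[X] (RatFunc ℂ) (derivative f.denom) / algebraMap ℂ[X] (RatFunc ℂ) f.denom) := by
  have hshift : ∀ i : ℤ, f.num - ((i - m : ℤ) : ℂ[X]) * derivative f.denom =
      f.num + m * derivative f.denom - i * derivative f.denom := fun i => by push_cast; ring
  have hcop : IsCoprime (f.num + m * derivative f.denom) f.denom := by
    simpa [hshift] using (hf (0 - m)).symm
  have hsum : f + (m : RatFunc ℂ) * algebraMap ℂ[X] (RatFunc ℂ) (derivative f.denom) /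
      algebraMap ℂ[X] (RatFunc ℂ) f.denom = algebraMap ℂ[X] (RatFunc ℂ)
        (f.num + m * derivative f.denom) / algebraMap ℂ[X] (RatFunc ℂ) f.denom := by
    rw [map_add, add_div, RatFunc.num_div_denom, map_mul, map_intCast]
  intro i
  rw [hsum, RatFunc.num_div_of_isCoprime (RatFunc.monic_denom f) hcop,
    RatFunc.denom_div_of_isCoprime (RatFunc.monic_denom f) hcop, ← hshift]
  exact hf (i - m)

theorem diffReduced_apply_of_leibniz (δ : RatFunc ℂ → RatFunc ℂ)
    (hmul : ∀ a b : RatFunc ℂ, δ (a * b) = a * δ b + b * δ a)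
    (hder : ∀ p : ℂ[X],
      δ (algebraMap ℂ[X] (RatFunc ℂ) p) = algebraMap ℂ[X] (RatFunc ℂ) (derivative p))
    (h : RatFunc ℂ) : DiffReduced (δ h) := by
  have hid : (δ h).num * h.denom ^ 2 = wronskian h.denom h.num * (δ h).denom := by
    apply RatFunc.algebraMap_injective ℂ
    have hA := (div_eq_iff (RatFunc.algebraMap_ne_zero (RatFunc.denom_ne_zero (δ h)))).1
      (RatFunc.num_div_denom (δ h))
    simp only [map_mul, map_pow, hA, ← RatFunc.mul_denom_sq_eq_wronskian δ hmul hder]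
    ring
  intro i
  refine isCoprime_of_forall_isRoot fun r hBr => ?_
  have hB' := isRoot_derivative_of_mul_sq_eq_wronskian_mul (RatFunc.isCoprime_num_denom _)
    (RatFunc.isCoprime_num_denom h) (RatFunc.denom_ne_zero h) (RatFunc.denom_ne_zero _) hid hBr
  simpa [IsRoot, hB'.eq_zero] using
    (RatFunc.isCoprime_num_denom (δ h)).symm.not_isRoot_of_isRoot hBr

theorem stmt18_general (δ : RatFunc ℂ → RatFunc ℂ)
    (hmul : ∀ a b : RatFunc ℂ, δ (a * b) = a * δ b + b * δ a)
    (hder : ∀ p : Polynomial ℂ,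
      δ (algebraMap (Polynomial ℂ) (RatFunc ℂ) p) =
        algebraMap (Polynomial ℂ) (RatFunc ℂ) (Polynomial.derivative p)) :
    (∀ f g : RatFunc ℂ, DiffReduced f →
      (∃ q : Polynomial ℂ,
        algebraMap (Polynomial ℂ) (RatFunc ℂ) f.denom * δ g +
          algebraMap (Polynomial ℂ) (RatFunc ℂ) f.num * g =
            algebraMap (Polynomial ℂ) (RatFunc ℂ) q) →
      ∃ q : Polynomial ℂ, g = algebraMap (Polynomial ℂ) (RatFunc ℂ) q) ∧
    (∀ f : RatFunc ℂ, DiffReduced f → ∀ m : ℤ,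
      DiffReduced (f + (m : RatFunc ℂ) *
        algebraMap (Polynomial ℂ) (RatFunc ℂ) (Polynomial.derivative f.denom) /
          algebraMap (Polynomial ℂ) (RatFunc ℂ) f.denom)) ∧
    (∀ h : RatFunc ℂ, DiffReduced (δ h)) :=
  ⟨fun _ _ hf hg => hf.exists_eq_algebraMap δ hmul hder hg,
    fun _ hf m => hf.add_intCast_mul_derivative_denom_div m,
    diffReduced_apply_of_leibniz δ hmul hder⟩

/-- Properties of differential-reduced rational functions over `(ℂ(x), d/dx)`:
(1) if `f` is differential-reduced and `b·δ(g) + a·g` is a polynomial (where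
`f = a/b` in lowest terms), then `g` is a polynomial; (2) if `f` is
differential-reduced then so is `f + m·δ(b)/b` for every `m ∈ ℤ`; (3) `δ h` is
differential-reduced for every `h ∈ ℂ(x)`. -/
theorem stmt18 (δ : RatFunc ℂ → RatFunc ℂ)
    (hadd : ∀ a b : RatFunc ℂ, δ (a + b) = δ a + δ b)
    (hmul : ∀ a b : RatFunc ℂ, δ (a * b) = a * δ b + b * δ a)
    (hder : ∀ p : Polynomial ℂ,
      δ (algebraMap (Polynomial ℂ) (RatFunc ℂ) p) =
        algebraMap (Polynomial ℂ) (RatFunc ℂ) (Polynomial.derivative p)) :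
    (∀ f g : RatFunc ℂ, DiffReduced f →
      (∃ q : Polynomial ℂ,
        algebraMap (Polynomial ℂ) (RatFunc ℂ) f.denom * δ g +
          algebraMap (Polynomial ℂ) (RatFunc ℂ) f.num * g =
            algebraMap (Polynomial ℂ) (RatFunc ℂ) q) →
      ∃ q : Polynomial ℂ, g = algebraMap (Polynomial ℂ) (RatFunc ℂ) q) ∧
    (∀ f : RatFunc ℂ, DiffReduced f → ∀ m : ℤ,
      DiffReduced (f + (m : RatFunc ℂ) *
        algebraMap (Polynomial ℂ) (RatFunc ℂ) (Polynomial.derivative f.denom) /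
          algebraMap (Polynomial ℂ) (RatFunc ℂ) f.denom)) ∧
    (∀ h : RatFunc ℂ, DiffReduced (δ h)) :=
  stmt18_general δ hmul hder
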